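/- arXiv:1409.4749 — 3 statements merged into one kernel-verified Lean document; each statement's English description precedes it below -/
import Mathlib

section
/- Let V = v(M, θ) be a rectifiable d-varifold in an open set Ω ⊆ ℝⁿ. Let x ∈ M be a point where the approximate tangent plane T_xM exists and θ(x) > 0. Then for every P ∈ G(d,n) with P ≠ T_xM, the averaged height excess E₀(x, P, V) = ∫₀¹ r^{−(d+1)} ∫_{B_r(x)∩Ω} (d(y−x,P)/r)² d‖V‖(y) dr is infinite. -/
open MeasureTheory Metric Set Filter
open scoped ENNReal Topology

variable {n : ℕ}

/-- The averaged height excess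
`E₀(x,P,V) = ∫₀¹ r^{−(d+1)} ∫_{B_r(x)∩Ω} (d(y−x,P)/r)² d‖V‖(y) dr`, written in terms of the
mass measure `μ = ‖V‖`. -/
noncomputable def E0 (d : ℕ) (Ω : Set (EuclideanSpace ℝ (Fin n)))
    (μ : Measure (EuclideanSpace ℝ (Fin n))) (x : EuclideanSpace ℝ (Fin n))
    (P : Submodule ℝ (EuclideanSpace ℝ (Fin n))) : ℝ≥0∞ :=
  ∫⁻ r in Set.Ioo (0 : ℝ) 1,
    ENNReal.ofReal (1 / r ^ (d + 1)) *
      ∫⁻ y in Metric.ball x r ∩ Ω,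
        ENNReal.ofReal ((Metric.infDist (y - x) (P : Set (EuclideanSpace ℝ (Fin n))) / r) ^ 2) ∂μ

/-- A set is countably `d`-rectifiable if it can be covered, up to an `ℋᵈ`-null set, by
countably many Lipschitz images of `ℝᵈ`. -/
def CountablyDRectifiable (d : ℕ) (M : Set (EuclideanSpace ℝ (Fin n))) : Prop :=
  ∃ (M₀ : Set (EuclideanSpace ℝ (Fin n)))
    (f : ℕ → EuclideanSpace ℝ (Fin d) → EuclideanSpace ℝ (Fin n)),
    μH[(d : ℝ)] M₀ = 0 ∧ (∀ i, ∃ K : NNReal, LipschitzWith K (f i)) ∧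
      M ⊆ M₀ ∪ ⋃ i, Set.range (f i)

/-- `μ` has approximate tangent plane `P` (with some positive multiplicity) at `x`. -/
def ApproxTangentAt (d : ℕ) (μ : Measure (EuclideanSpace ℝ (Fin n)))
    (x : EuclideanSpace ℝ (Fin n)) (P : Submodule ℝ (EuclideanSpace ℝ (Fin n))) : Prop :=
  ∃ θ₀ : ℝ, 0 < θ₀ ∧ ∀ φ : EuclideanSpace ℝ (Fin n) → ℝ, Continuous φ → HasCompactSupport φ →
    Tendsto (fun r : ℝ => (r ^ d)⁻¹ * ∫ y, φ (r⁻¹ • (y - x)) ∂μ) (𝓝[>] 0)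
      (𝓝 (θ₀ * ∫ y in (P : Set (EuclideanSpace ℝ (Fin n))), φ y ∂(μH[(d : ℝ)])))

/-! Take `v ∈ T \ P` inside the unit ball and a small ball `B ∋ v` on which the distance to `P`
is at least `ρ > 0`. A bump function supported in `B` has positive integral over `T`, so the
blow-up defining the tangent plane gives the rescaled set `x + r • B` mass `≳ r ^ d` for small `r`.
On that set `d(y - x, P) ≥ ρ r`, hence the inner integral of `E₀` is `≳ r ^ d`, the `r`-integrand
is `≳ 1 / r`, and `1 / r` is not integrable at `0`. -/

theorem lintegral_ofReal_div_Ioo_eq_top {a K : ℝ} (ha : 0 < a) (hK : 0 < K) :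
    ∫⁻ r in Ioo (0 : ℝ) a, ENNReal.ofReal (K / r) = ⊤ := by
  have hinv : ¬ IntegrableOn (fun r : ℝ => r⁻¹) (Ioo 0 a) := by
    rw [← intervalIntegrable_iff_integrableOn_Ioo_of_le ha.le (by simp) (by simp),
      intervalIntegrable_inv_iff]
    simp [ha.ne, ha.le]
  have hinv_top : ∫⁻ r in Ioo (0 : ℝ) a, ENNReal.ofReal r⁻¹ = ⊤ := by
    by_contra h
    refine hinv ((lintegral_ofReal_ne_top_iff_integrable
      measurable_inv.aestronglyMeasurable ?_).1 h)
    filter_upwards [ae_restrict_mem measurableSet_Ioo] with r hr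
    exact inv_nonneg.2 hr.1.le
  simp_rw [div_eq_mul_inv, ENNReal.ofReal_mul hK.le]
  rw [lintegral_const_mul' _ _ ENNReal.ofReal_ne_top, hinv_top,
    ENNReal.mul_top (ENNReal.ofReal_pos.2 hK).ne']

namespace Submodule

variable {E : Type*} [NormedAddCommGroup E] [NormedSpace ℝ E]

open scoped Pointwise in
theorem infDist_smul (P : Submodule ℝ E) (c : ℝ) (z : E) :
    infDist (c • z) P = |c| * infDist z P := by
  rcases eq_or_ne c 0 with rfl | hc
  · simp [infDist_zero_of_mem P.zero_mem]
  have hP : c • (P : Set E) = P := by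
    ext w
    rw [mem_smul_set_iff_inv_smul_mem₀ hc]
    exact P.smul_mem_iff (inv_ne_zero hc)
  rw [← Real.norm_eq_abs, ← infDist_smul₀ hc, hP]

theorem exists_mem_notMem_norm_lt_one {T P : Submodule ℝ E} (h : ¬ T ≤ P) :
    ∃ v ∈ T, v ∉ P ∧ ‖v‖ < 1 := by
  obtain ⟨v, hvT, hvP⟩ := SetLike.not_le_iff_exists.1 h
  have hc : (‖v‖ + 1)⁻¹ ≠ 0 := by positivity
  refine ⟨(‖v‖ + 1)⁻¹ • v, T.smul_mem _ hvT, fun hv => hvP ((P.smul_mem_iff hc).1 hv), ?_⟩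
  rw [norm_smul, Real.norm_eq_abs, abs_of_pos (by positivity), inv_mul_lt_one₀ (by positivity)]
  linarith

theorem setIntegral_hausdorffMeasure_pos [MeasurableSpace E] [BorelSpace E]
    (T : Submodule ℝ E) [FiniteDimensional ℝ T] {f : E → ℝ} (hf : Continuous f)
    (hfc : HasCompactSupport f) (hf0 : 0 ≤ f) {v : E} (hvT : v ∈ T) (hfv : f v ≠ 0) :
    0 < ∫ y in T, f y ∂μH[(Module.finrank ℝ T : ℝ)] := by
  have hemb : Topology.IsClosedEmbedding ((↑) : T → E) :=
    T.closed_of_finiteDimensional.isClosedEmbedding_subtypeVal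
  have hmap : Measure.map ((↑) : T → E) μH[(Module.finrank ℝ T : ℝ)]
      = μH[(Module.finrank ℝ T : ℝ)].restrict T := by
    simpa using T.subtypeₗᵢ.isometry.map_hausdorffMeasure (Or.inl (Nat.cast_nonneg _))
  rw [← hmap, hemb.measurableEmbedding.integral_map]
  exact (hf.comp continuous_subtype_val).integral_pos_of_hasCompactSupport_nonneg_nonzero
    (hfc.comp_isClosedEmbedding hemb) (fun z => hf0 z) (x := ⟨v, hvT⟩) hfv

end Submodule

theorem exists_ball_subset_le_infDist {X : Type*} [PseudoMetricSpace X] {s U : Set X} {v : X}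
    (hs : IsClosed s) (hs₀ : s.Nonempty) (hv : v ∉ s) (hU : U ∈ 𝓝 v) :
    ∃ ρ > 0, ball v ρ ⊆ U ∧ ∀ z ∈ ball v ρ, ρ ≤ infDist z s := by
  obtain ⟨ε, hε, hεU⟩ := Metric.mem_nhds_iff.1 hU
  have hδ := (hs.notMem_iff_infDist_pos hs₀).1 hv
  refine ⟨min ε (infDist v s / 2), by positivity, (ball_subset_ball (min_le_left _ _)).trans hεU,
    fun z hz => ?_⟩
  have := infDist_le_infDist_add_dist (x := v) (y := z) (s := s)
  rw [mem_ball'] at hz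
  linarith [min_le_right ε (infDist v s / 2)]

theorem ofReal_integral_le_lintegral_ofReal {α : Type*} [MeasurableSpace α] {μ : Measure α}
    {f : α → ℝ} (hf : AEStronglyMeasurable f μ) (hf0 : 0 ≤ᵐ[μ] f) :
    ENNReal.ofReal (∫ a, f a ∂μ) ≤ ∫⁻ a, ENNReal.ofReal (f a) ∂μ := by
  rw [integral_eq_lintegral_of_nonneg_ae hf0 hf]
  exact ENNReal.ofReal_toReal_le

theorem ofReal_sq_mul_lintegral_le_setLIntegral_infDist_sq {E : Type*} [NormedAddCommGroup E]
    [NormedSpace ℝ E] [MeasurableSpace E] (μ : Measure E) (P : Submodule ℝ E) {φ : E → ℝ}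
    {β r : ℝ} {x : E} {s : Set E} (hφ : ∀ z, φ z ≤ 1)
    (hsupp : Function.support φ ⊆ ball 0 1 ∩ {z | β ≤ infDist z P}) (hβ : 0 ≤ β) (hr : 0 < r)
    (hs : ball x r ⊆ s) :
    ENNReal.ofReal (β ^ 2) * ∫⁻ y, ENNReal.ofReal (φ (r⁻¹ • (y - x))) ∂μ ≤
      ∫⁻ y in s, ENNReal.ofReal ((infDist (y - x) P / r) ^ 2) ∂μ := by
  have hdist : ∀ y, infDist (y - x) P / r = infDist (r⁻¹ • (y - x)) P := fun y => by
    rw [P.infDist_smul, abs_of_pos (inv_pos.2 hr), inv_mul_eq_div]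
  have hball : ∀ y, φ (r⁻¹ • (y - x)) ≠ 0 → y ∈ ball x r := fun y hy => by
    have h := (hsupp hy).1
    rwa [mem_ball_zero_iff, norm_smul, Real.norm_eq_abs, abs_of_pos (inv_pos.2 hr),
      inv_mul_lt_one₀ hr, ← dist_eq_norm] at h
  rw [← lintegral_const_mul' _ _ ENNReal.ofReal_ne_top,
    ← setLIntegral_eq_of_support_subset (s := s)]
  · refine lintegral_mono fun y => ?_
    by_cases hy : φ (r⁻¹ • (y - x)) = 0
    · simp [hy]
    rw [← ENNReal.ofReal_mul (sq_nonneg β), hdist]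
    refine ENNReal.ofReal_le_ofReal ?_
    calc β ^ 2 * φ (r⁻¹ • (y - x)) ≤ β ^ 2 * 1 := by gcongr; exact hφ _
      _ ≤ infDist (r⁻¹ • (y - x)) P ^ 2 := by rw [mul_one]; gcongr; exact (hsupp hy).2
  · intro y hy
    refine hs (hball y fun h => hy ?_)
    simp [h]

theorem E0_eq_top_of_eventually_le {d : ℕ} {Ω : Set (EuclideanSpace ℝ (Fin n))}
    {μ : Measure (EuclideanSpace ℝ (Fin n))} {x : EuclideanSpace ℝ (Fin n)}
    {P : Submodule ℝ (EuclideanSpace ℝ (Fin n))} {K : ℝ} (hK : 0 < K)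
    (h : ∀ᶠ r in 𝓝[>] 0, ENNReal.ofReal (K * r ^ d) ≤
      ∫⁻ y in ball x r ∩ Ω, ENNReal.ofReal ((infDist (y - x) P / r) ^ 2) ∂μ) :
    E0 d Ω μ x P = ⊤ := by
  obtain ⟨r₁, hr₁, hle⟩ := (nhdsGT_basis (0 : ℝ)).eventually_iff.1 h
  have hr₁' : 0 < min r₁ 1 := lt_min hr₁ one_pos
  rw [eq_top_iff, ← lintegral_ofReal_div_Ioo_eq_top hr₁' hK]
  refine (setLIntegral_mono' measurableSet_Ioo fun r hr => ?_).trans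
    (lintegral_mono' (Measure.restrict_mono (Ioo_subset_Ioo le_rfl (min_le_right _ _))
      le_rfl) le_rfl)
  have hr0 : 0 < r := hr.1
  have hscale : K / r = 1 / r ^ (d + 1) * (K * r ^ d) := by
    field_simp
    ring
  rw [hscale, ENNReal.ofReal_mul (by positivity)]
  gcongr
  exact hle ⟨hr0, hr.2.trans_le (min_le_left _ _)⟩

theorem ApproxTangentAt.exists_pos_eventually_le_integral {d : ℕ}
    {μ : Measure (EuclideanSpace ℝ (Fin n))} {x : EuclideanSpace ℝ (Fin n)}
    {T : Submodule ℝ (EuclideanSpace ℝ (Fin n))} (htan : ApproxTangentAt d μ x T)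
    (hT : Module.finrank ℝ T = d) {φ : EuclideanSpace ℝ (Fin n) → ℝ} (hφ : Continuous φ)
    (hφc : HasCompactSupport φ) (hφ0 : 0 ≤ φ) {v : EuclideanSpace ℝ (Fin n)} (hvT : v ∈ T)
    (hφv : φ v ≠ 0) :
    ∃ c > 0, ∀ᶠ r in 𝓝[>] 0, c * r ^ d ≤ ∫ y, φ (r⁻¹ • (y - x)) ∂μ := by
  obtain ⟨θ₀, hθ₀, hlim⟩ := htan
  set L := θ₀ * ∫ y in (T : Set (EuclideanSpace ℝ (Fin n))), φ y ∂μH[(d : ℝ)]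
  have hL : 0 < L := by
    subst hT
    exact mul_pos hθ₀ (T.setIntegral_hausdorffMeasure_pos hφ hφc hφ0 hvT hφv)
  refine ⟨L / 2, half_pos hL, ?_⟩
  filter_upwards [(hlim φ hφ hφc).eventually (lt_mem_nhds (half_lt_self hL)),
    self_mem_nhdsWithin] with r hr (hr0 : 0 < r)
  rw [inv_mul_eq_div, lt_div_iff₀ (pow_pos hr0 d)] at hr
  exact hr.le

theorem E0_eq_top_of_ne_tangent_general {d : ℕ}
    (Ω : Set (EuclideanSpace ℝ (Fin n))) (hΩ : IsOpen Ω)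
    (M : Set (EuclideanSpace ℝ (Fin n))) (hMΩ : M ⊆ Ω)
    (μ : Measure (EuclideanSpace ℝ (Fin n)))
    (x : EuclideanSpace ℝ (Fin n)) (hx : x ∈ M)
    (T : Submodule ℝ (EuclideanSpace ℝ (Fin n))) (hT : Module.finrank ℝ T = d)
    (htan : ApproxTangentAt d μ x T) :
    ∀ P : Submodule ℝ (EuclideanSpace ℝ (Fin n)), Module.finrank ℝ P = d → P ≠ T →
      E0 d Ω μ x P = ⊤ := by
  intro P hPd hPT
  obtain ⟨ε, hε, hεΩ⟩ := Metric.isOpen_iff.1 hΩ x (hMΩ hx)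
  have hTP : ¬ T ≤ P := fun hle =>
    hPT (Submodule.eq_of_le_of_finrank_eq hle (hT.trans hPd.symm)).symm
  obtain ⟨v, hvT, hvP, hv⟩ := Submodule.exists_mem_notMem_norm_lt_one hTP
  obtain ⟨ρ, hρ, hρ1, hρP⟩ := exists_ball_subset_le_infDist P.closed_of_finiteDimensional
    ⟨0, P.zero_mem⟩ hvP (isOpen_ball.mem_nhds (mem_ball_zero_iff.2 hv))
  let φ : ContDiffBump v := ⟨ρ / 2, ρ, half_pos hρ, half_lt_self hρ⟩
  obtain ⟨c, hc, hmass⟩ := htan.exists_pos_eventually_le_integral hT φ.continuous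
    φ.hasCompactSupport (fun _ => φ.nonneg) hvT (φ.pos_of_mem_ball (mem_ball_self hρ)).ne'
  refine E0_eq_top_of_eventually_le (K := ρ ^ 2 * c) (by positivity) ?_
  filter_upwards [hmass, Ioo_mem_nhdsGT hε] with r hmass_r hr
  calc ENNReal.ofReal (ρ ^ 2 * c * r ^ d)
      ≤ ENNReal.ofReal (ρ ^ 2) * ENNReal.ofReal (∫ y, φ (r⁻¹ • (y - x)) ∂μ) := by
        rw [mul_assoc, ENNReal.ofReal_mul (sq_nonneg ρ)]
        gcongr
    _ ≤ ENNReal.ofReal (ρ ^ 2) * ∫⁻ y, ENNReal.ofReal (φ (r⁻¹ • (y - x))) ∂μ := by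
        have hcont : Continuous fun y => φ (r⁻¹ • (y - x)) :=
          φ.continuous.comp (by fun_prop)
        gcongr
        exact ofReal_integral_le_lintegral_ofReal hcont.aestronglyMeasurable
          (Eventually.of_forall fun _ => φ.nonneg)
    _ ≤ _ := ofReal_sq_mul_lintegral_le_setLIntegral_infDist_sq μ P (fun _ => φ.le_one)
        (φ.support_eq.trans_subset (subset_inter hρ1 hρP)) hρ.le hr.1
        (subset_inter subset_rfl ((ball_subset_ball hr.2.le).trans hεΩ))

/-- Let `V = v(M,θ)` be a rectifiable `d`-varifold in an open set `Ω`
(its mass is `‖V‖ = θ ℋᵈ|_M`), and let `x ∈ M` be a point where the approximate tangent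
plane `T` of `‖V‖` exists with positive multiplicity. Then for every `d`-plane `P ≠ T`, the
averaged height excess `E₀(x,P,V)` is infinite. -/
theorem E0_eq_top_of_ne_tangent {d : ℕ}
    (Ω : Set (EuclideanSpace ℝ (Fin n))) (hΩ : IsOpen Ω)
    (M : Set (EuclideanSpace ℝ (Fin n))) (hM : CountablyDRectifiable d M) (hMΩ : M ⊆ Ω)
    (θ : EuclideanSpace ℝ (Fin n) → ℝ≥0∞)
    (μ : Measure (EuclideanSpace ℝ (Fin n)))
    (hμ : μ = ((μH[(d : ℝ)]).restrict M).withDensity θ)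
    [IsFiniteMeasureOnCompacts μ]
    (x : EuclideanSpace ℝ (Fin n)) (hx : x ∈ M)
    (T : Submodule ℝ (EuclideanSpace ℝ (Fin n))) (hT : Module.finrank ℝ T = d)
    (htan : ApproxTangentAt d μ x T) :
    ∀ P : Submodule ℝ (EuclideanSpace ℝ (Fin n)), Module.finrank ℝ P = d → P ≠ T →
      E0 d Ω μ x P = ⊤ :=
  E0_eq_top_of_ne_tangent_general Ω hΩ M hMΩ μ x hx T hT htan
end

section
/- Let (μ_i) be positive Radon measures on an open set Ω ⊆ ℝⁿ converging weakly-* to μ. Assume there exist 0 < C₁ < C₂ and a positive decreasing sequence β_i ↓ 0 such that for μ_i-a.e. x ∈ Ω and every r with β_i < r < d(x, Ωᶜ), one has C₁rᵈ ≤ μ_i(B_r(x)) ≤ C₂rᵈ. Then for μ-a.e. x ∈ Ω and every 0 < r < d(x, Ωᶜ), C₁rᵈ ≤ μ(B_r(x)) ≤ C₂rᵈ. -/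
/-!
Weak-* convergence gives `μ(U) ≤ liminf μᵢ(U)` for open `U ⊆ Ω` and `limsup μᵢ(K) ≤ μ(K)` for
compact `K ⊆ Ω`. If `x` lies in the support of `μ`, the first inequality makes `μᵢ(B_ε(x)) > 0`
for large `i`, so `B_ε(x)` contains a point `y` at which the estimates for `μᵢ` hold; as
`B_s(y) ⊆ B̄_{s+ε}(x)` and `B_s(x) ⊆ B_{s+ε}(y)`, they pass to `x` up to an error `ε` in the
radius, and then to `μ` by semicontinuity. Letting `ε → 0` (for the upper bound through
`μ(B_s(x)) ↑ μ(B_r(x))` as `s ↑ r`) gives the estimates for `μ` at every point of its support,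
which is `μ`-conull.
-/

open MeasureTheory Metric Set Filter
open scoped ENNReal Topology

/-- Weak-* convergence of Radon measures on an open set `Ω`. -/
def WeakStarTendsto {n : ℕ} (μi : ℕ → Measure (EuclideanSpace ℝ (Fin n)))
    (μ : Measure (EuclideanSpace ℝ (Fin n))) (Ω : Set (EuclideanSpace ℝ (Fin n))) : Prop :=
  ∀ φ : EuclideanSpace ℝ (Fin n) → ℝ, Continuous φ → HasCompactSupport φ → tsupport φ ⊆ Ω →
    Tendsto (fun i => ∫ y, φ y ∂(μi i)) atTop (𝓝 (∫ y, φ y ∂μ))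

section MetricMeasure

variable {X : Type*} [MeasurableSpace X]

theorem lintegral_ofReal_le_measure [TopologicalSpace X] (ν : Measure X) {f : X → ℝ}
    (hf : ∀ x, f x ≤ 1) {V : Set X} (hV : MeasurableSet V) (hfV : tsupport f ⊆ V) :
    ∫⁻ x, ENNReal.ofReal (f x) ∂ν ≤ ν V := by
  rw [← lintegral_indicator_one hV]
  refine lintegral_mono fun x => ?_
  by_cases hx : x ∈ V
  · simpa [indicator_of_mem hx] using hf x
  · simp [indicator_of_notMem hx, image_eq_zero_of_notMem_tsupport fun h => hx (hfV h)]

theorem measure_le_lintegral_ofReal (ν : Measure X) {f : X → ℝ} {K : Set X}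
    (hK : MeasurableSet K) (hf : EqOn f 1 K) : ν K ≤ ∫⁻ x, ENNReal.ofReal (f x) ∂ν := by
  rw [← lintegral_indicator_one hK]
  refine lintegral_mono fun x => ?_
  by_cases hx : x ∈ K
  · simp [indicator_of_mem hx, hf hx]
  · simp [indicator_of_notMem hx]

variable [PseudoMetricSpace X]

def DensityEstimatesAt (ν : Measure X) (Ω : Set X) (β C₁ C₂ : ℝ) (d : ℕ) (x : X) : Prop :=
  x ∈ Ω → ∀ r : ℝ, β < r → r < infDist x Ωᶜ →
    ENNReal.ofReal (C₁ * r ^ d) ≤ ν (ball x r) ∧ ν (ball x r) ≤ ENNReal.ofReal (C₂ * r ^ d)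

theorem tendsto_measure_ball_nhdsLT (ν : Measure X) (x : X) (r : ℝ) :
    Tendsto (fun s => ν (ball x s)) (𝓝[<] r) (𝓝 (ν (ball x r))) := by
  have hunion : ⋃ s : Iio r, ball x (s : ℝ) = ball x r := by
    refine Subset.antisymm (iUnion_subset fun s => ball_subset_ball s.2.le) fun z hz => ?_
    obtain ⟨s, hzs, hsr⟩ := exists_between (mem_ball.mp hz)
    exact mem_iUnion.mpr ⟨⟨s, hsr⟩, hzs⟩
  rw [← tendsto_comp_coe_Iio_atTop, ← hunion]
  exact tendsto_measure_iUnion_atTop fun a b hab => ball_subset_ball hab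

variable {ν : Measure X} {Ω : Set X} {β C₁ C₂ : ℝ} {d : ℕ}

theorem density_bounds_of_measure_ball_ne_zero
    (hdens : ∀ᵐ y ∂ν, DensityEstimatesAt ν Ω β C₁ C₂ d y)
    {x : X} {s t : ℝ} (hs : 0 < s) (hβs : β < s) (ht : t + (t - s) ≤ infDist x Ωᶜ)
    (hpos : ν (ball x (t - s)) ≠ 0) :
    ENNReal.ofReal (C₁ * s ^ d) ≤ ν (closedBall x t) ∧
      ν (ball x s) ≤ ENNReal.ofReal (C₂ * t ^ d) := by
  obtain ⟨y, hyball, hy⟩ :=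
    Measure.exists_mem_of_measure_ne_zero_of_ae hpos (ae_restrict_of_ae hdens)
  have hyx : dist y x < t - s := mem_ball.mp hyball
  have hty : t < infDist y Ωᶜ := by
    linarith [infDist_le_infDist_add_dist (s := Ωᶜ) (x := x) (y := y), dist_comm x y]
  have hst : s < t := by linarith [dist_nonneg (x := y) (y := x)]
  have hyΩ : y ∈ Ω := ball_infDist_compl_subset (mem_ball_self (by linarith))
  refine ⟨(hy hyΩ s hβs (by linarith)).1.trans (measure_mono ?_),
    (measure_mono ?_).trans (hy hyΩ t (by linarith) hty).2⟩
  · exact ball_subset_closedBall.trans (closedBall_subset_closedBall' (by linarith))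
  · exact ball_subset_ball' (by rw [dist_comm]; linarith)

end MetricMeasure

namespace WeakStarTendsto

variable {n : ℕ} {Ω : Set (EuclideanSpace ℝ (Fin n))}
  {μi : ℕ → Measure (EuclideanSpace ℝ (Fin n))} {μ : Measure (EuclideanSpace ℝ (Fin n))}
  [∀ i, IsFiniteMeasureOnCompacts (μi i)] [IsFiniteMeasureOnCompacts μ]

theorem tendsto_lintegral (hw : WeakStarTendsto μi μ Ω) {f : EuclideanSpace ℝ (Fin n) → ℝ}
    (hf : Continuous f) (hfc : HasCompactSupport f) (hfΩ : tsupport f ⊆ Ω) (hf0 : 0 ≤ f) :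
    Tendsto (fun i => ∫⁻ y, ENNReal.ofReal (f y) ∂(μi i)) atTop
      (𝓝 (∫⁻ y, ENNReal.ofReal (f y) ∂μ)) := by
  have hint (ν : Measure (EuclideanSpace ℝ (Fin n))) [IsFiniteMeasureOnCompacts ν] :
      ∫⁻ y, ENNReal.ofReal (f y) ∂ν = ENNReal.ofReal (∫ y, f y ∂ν) :=
    (ofReal_integral_eq_lintegral_ofReal (hf.integrable_of_hasCompactSupport hfc)
      (.of_forall hf0)).symm
  simp only [hint]
  exact (ENNReal.continuous_ofReal.tendsto _).comp (hw f hf hfc hfΩ)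

theorem eventually_measure_lt_of_isCompact (hw : WeakStarTendsto μi μ Ω)
    {K W : Set (EuclideanSpace ℝ (Fin n))} (hK : IsCompact K) (hW : IsOpen W) (hKW : K ⊆ W)
    (hWΩ : W ⊆ Ω) {c : ℝ≥0∞} (hc : μ K < c) : ∀ᶠ i in atTop, μi i K < c := by
  obtain ⟨V, hKV, hV, hVc⟩ := Set.exists_isOpen_lt_of_lt K c hc
  obtain ⟨f, hf1, hfc, hfV, hf01⟩ := exists_continuousMap_one_of_isCompact_subset_isOpen hK
    (hV.inter hW) (subset_inter hKV hKW)
  have hlim := hw.tendsto_lintegral f.continuous hfc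
    (hfV.trans (inter_subset_right.trans hWΩ)) fun x => (hf01 x).1
  have hfμ : ∫⁻ y, ENNReal.ofReal (f y) ∂μ < c :=
    (lintegral_ofReal_le_measure μ (fun x => (hf01 x).2) hV.measurableSet
      (hfV.trans inter_subset_left)).trans_lt hVc
  filter_upwards [hlim.eventually_lt_const hfμ] with i hi
  exact (measure_le_lintegral_ofReal (μi i) hK.measurableSet hf1).trans_lt hi

theorem eventually_lt_measure_of_isOpen (hw : WeakStarTendsto μi μ Ω)
    {U : Set (EuclideanSpace ℝ (Fin n))} (hU : IsOpen U) (hUΩ : U ⊆ Ω) {c : ℝ≥0∞}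
    (hc : c < μ U) : ∀ᶠ i in atTop, c < μi i U := by
  obtain ⟨K, hKU, hK, hcK⟩ := hU.exists_lt_isCompact hc
  obtain ⟨f, hf1, hfc, hfU, hf01⟩ := exists_continuousMap_one_of_isCompact_subset_isOpen hK hU hKU
  have hlim := hw.tendsto_lintegral f.continuous hfc (hfU.trans hUΩ) fun x => (hf01 x).1
  have hfμ : c < ∫⁻ y, ENNReal.ofReal (f y) ∂μ :=
    hcK.trans_le (measure_le_lintegral_ofReal μ hK.measurableSet hf1)
  filter_upwards [hlim.eventually_const_lt hfμ] with i hi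
  exact hi.trans_le
    (lintegral_ofReal_le_measure (μi i) (fun x => (hf01 x).2) hU.measurableSet hfU)

variable {β : ℕ → ℝ} {C₁ C₂ : ℝ} {d : ℕ}

theorem density_bounds_of_mem_support (hw : WeakStarTendsto μi μ Ω)
    (hβ : Tendsto β atTop (𝓝 0))
    (hdens : ∀ i, ∀ᵐ y ∂(μi i), DensityEstimatesAt (μi i) Ω (β i) C₁ C₂ d y)
    {x : EuclideanSpace ℝ (Fin n)} (hx : x ∈ μ.support) {s t : ℝ} (hs : 0 < s) (hst : s < t)
    (ht : t + (t - s) ≤ infDist x Ωᶜ) :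
    ENNReal.ofReal (C₁ * s ^ d) ≤ μ (closedBall x t) ∧
      μ (ball x s) ≤ ENNReal.ofReal (C₂ * t ^ d) := by
  have hballΩ {R : ℝ} (hR : R ≤ infDist x Ωᶜ) : ball x R ⊆ Ω :=
    (ball_subset_ball hR).trans ball_infDist_compl_subset
  have hpos : 0 < μ (ball x (t - s)) :=
    nhds_basis_ball.mem_measureSupport.mp hx _ (sub_pos.mpr hst)
  have hbounds : ∀ᶠ i in atTop, ENNReal.ofReal (C₁ * s ^ d) ≤ μi i (closedBall x t) ∧
      μi i (ball x s) ≤ ENNReal.ofReal (C₂ * t ^ d) := by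
    filter_upwards [hβ.eventually_lt_const hs,
      hw.eventually_lt_measure_of_isOpen isOpen_ball (hballΩ (by linarith)) hpos] with i hβi hi
    exact density_bounds_of_measure_ball_ne_zero (hdens i) hs hβi ht hi.ne'
  constructor
  · refine le_of_forall_gt fun c hc => ?_
    obtain ⟨i, hi, hci⟩ := (hbounds.and (hw.eventually_measure_lt_of_isCompact
      (isCompact_closedBall x t) isOpen_ball (closedBall_subset_ball (by linarith))
      (hballΩ ht) hc)).exists
    exact hi.1.trans_lt hci
  · by_contra! hlt
    obtain ⟨i, hi, hlti⟩ := (hbounds.and (hw.eventually_lt_measure_of_isOpen isOpen_ball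
      (hballΩ (by linarith)) hlt)).exists
    exact hlti.not_ge hi.2

theorem densityEstimatesAt_of_mem_support (hw : WeakStarTendsto μi μ Ω)
    (hβ : Tendsto β atTop (𝓝 0))
    (hdens : ∀ i, ∀ᵐ y ∂(μi i), DensityEstimatesAt (μi i) Ω (β i) C₁ C₂ d y)
    {x : EuclideanSpace ℝ (Fin n)} (hx : x ∈ μ.support) : DensityEstimatesAt μ Ω 0 C₁ C₂ d x := by
  intro _ r hr hrx
  have hleft : ∀ᶠ s in 𝓝[<] r, ENNReal.ofReal (C₁ * s ^ d) ≤ μ (ball x r) ∧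
      μ (ball x s) ≤ ENNReal.ofReal (C₂ * ((s + r) / 2) ^ d) := by
    filter_upwards [Ioo_mem_nhdsLT hr] with s ⟨hs, hsr⟩
    -- `t = (s + r) / 2` gives `t + (t - s) = r` and `B̄_t(x) ⊆ B_r(x)`
    have h := hw.density_bounds_of_mem_support hβ hdens hx hs (t := (s + r) / 2) (by linarith)
      (by linarith)
    exact ⟨h.1.trans (measure_mono (closedBall_subset_ball (by linarith))), h.2⟩
  have hcont (C : ℝ) : Continuous fun s : ℝ => ENNReal.ofReal (C * s ^ d) :=
    ENNReal.continuous_ofReal.comp (continuous_const.mul (continuous_pow d))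
  have hmid : Tendsto (fun s : ℝ => (s + r) / 2) (𝓝[<] r) (𝓝 r) :=
    (by fun_prop : Continuous fun s : ℝ => (s + r) / 2).tendsto' r r (by ring)
      |>.mono_left nhdsWithin_le_nhds
  refine ⟨le_of_tendsto ?_ (hleft.mono fun _ h => h.1),
    le_of_tendsto_of_tendsto (tendsto_measure_ball_nhdsLT μ x r) ?_ (hleft.mono fun _ h => h.2)⟩
  · exact (hcont C₁).continuousAt.tendsto.mono_left nhdsWithin_le_nhds
  · exact (hcont C₂).continuousAt.tendsto.comp hmid

end WeakStarTendsto

theorem density_estimates_pass_to_limit_general {n d : ℕ}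
    (Ω : Set (EuclideanSpace ℝ (Fin n)))
    (μi : ℕ → Measure (EuclideanSpace ℝ (Fin n))) (μ : Measure (EuclideanSpace ℝ (Fin n)))
    [∀ i, IsFiniteMeasureOnCompacts (μi i)] [IsFiniteMeasureOnCompacts μ]
    (hw : WeakStarTendsto μi μ Ω)
    (C₁ C₂ : ℝ)
    (β : ℕ → ℝ)
    (hβlim : Tendsto β atTop (𝓝 0))
    (hdens : ∀ i, ∀ᵐ x ∂(μi i), x ∈ Ω → ∀ r : ℝ, β i < r → r < Metric.infDist x Ωᶜ →
      ENNReal.ofReal (C₁ * r ^ d) ≤ μi i (Metric.ball x r) ∧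
      μi i (Metric.ball x r) ≤ ENNReal.ofReal (C₂ * r ^ d)) :
    ∀ᵐ x ∂μ, x ∈ Ω → ∀ r : ℝ, 0 < r → r < Metric.infDist x Ωᶜ →
      ENNReal.ofReal (C₁ * r ^ d) ≤ μ (Metric.ball x r) ∧
      μ (Metric.ball x r) ≤ ENNReal.ofReal (C₂ * r ^ d) := by
  filter_upwards [Measure.support_mem_ae] with x hx
  exact hw.densityEstimatesAt_of_mem_support hβlim hdens hx

/-- If `μ_i ⇀* μ` on an open set `Ω` and each `μ_i` satisfies the density
estimates `C₁rᵈ ≤ μ_i(B_r(x)) ≤ C₂rᵈ` for `μ_i`-a.e. `x ∈ Ω` and all `β_i < r < d(x,Ωᶜ)`,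
where `β_i ↓ 0`, then `μ` satisfies `C₁rᵈ ≤ μ(B_r(x)) ≤ C₂rᵈ` for `μ`-a.e. `x ∈ Ω` and all
`0 < r < d(x,Ωᶜ)`. -/
theorem density_estimates_pass_to_limit {n d : ℕ}
    (Ω : Set (EuclideanSpace ℝ (Fin n))) (hΩ : IsOpen Ω)
    (μi : ℕ → Measure (EuclideanSpace ℝ (Fin n))) (μ : Measure (EuclideanSpace ℝ (Fin n)))
    [∀ i, IsFiniteMeasureOnCompacts (μi i)] [IsFiniteMeasureOnCompacts μ]
    (hw : WeakStarTendsto μi μ Ω)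
    (C₁ C₂ : ℝ) (hC₁ : 0 < C₁) (hC₁₂ : C₁ < C₂)
    (β : ℕ → ℝ) (hβpos : ∀ i, 0 < β i) (hβmono : Antitone β)
    (hβlim : Tendsto β atTop (𝓝 0))
    (hdens : ∀ i, ∀ᵐ x ∂(μi i), x ∈ Ω → ∀ r : ℝ, β i < r → r < Metric.infDist x Ωᶜ →
      ENNReal.ofReal (C₁ * r ^ d) ≤ μi i (Metric.ball x r) ∧
      μi i (Metric.ball x r) ≤ ENNReal.ofReal (C₂ * r ^ d)) :
    ∀ᵐ x ∂μ, x ∈ Ω → ∀ r : ℝ, 0 < r → r < Metric.infDist x Ωᶜ →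
      ENNReal.ofReal (C₁ * r ^ d) ≤ μ (Metric.ball x r) ∧
      μ (Metric.ball x r) ≤ ENNReal.ofReal (C₂ * r ^ d) :=
  density_estimates_pass_to_limit_general Ω μi μ hw C₁ C₂ β hβlim hdens
end

section
/- Let Ω ⊆ ℝⁿ be open, (μ_i) Radon measures converging weakly-* to μ with sup_i μ_i(Ω) < ∞, and ω ⊂⊂ Ω open with μ(∂ω) = 0. For Radon measures ν, λ define Δ(ν,λ) = sup over φ ∈ Lip_k(ω) with ‖φ‖_∞ ≤ C and over x ∈ ω̄ of ∫₀^{d(ω̄,Ωᶜ)/2} |∫_{B_r(x)∩ω} φ dν − ∫_{B_r(x)∩ω} φ dλ| dr. Then Δ(μ_i, μ) → 0 as i → ∞ for any fixed k, C ≥ 0. -/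
/-!
For a fixed continuous test function `ψ` and centre `z`, the ball integrals
`∫_{B_r(z) ∩ ω} ψ dμ_i` converge for every radius with `μ(∂B_r(z)) = 0`, i.e. for all but
countably many `r`: sandwich `1_{B_r(z) ∩ ω}` between continuous cutoffs supported in `Ω`
and use `μ(∂(B_r(z) ∩ ω)) = 0`. Dominated convergence in `r` then gives `Δ → 0` for each
fixed `(ψ, z)`.

The convergence is uniform because the integrand of `Δ` is Lipschitz in `(ψ, x)`, with
constants controlled by `sup_i μ_i(Ω)`: changing `ψ` by `η` on `ω̄` costs `R η` times the
mass, and moving the centre by `δ` costs `2 δ C` times the mass, since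
`B_r(x) △ B_r(z) ⊆ B_{r+δ}(z) \ B_{r-δ}(z)` and `r ↦ ∫_{B_r(z)} |ψ|` is monotone.
Arzelà–Ascoli gives a finite net of the `k`-Lipschitz functions bounded by `C`, and `ω̄` is
compact.
-/

open MeasureTheory Metric Set Filter
open scoped ENNReal Topology NNReal

/-- The distance `d(ω̄, Ωᶜ)` from the (compact) closure of `ω` to the complement of `Ω`. -/
noncomputable def setDistToCompl {n : ℕ} (ω Ω : Set (EuclideanSpace ℝ (Fin n))) : ℝ :=
  sInf ((fun x => Metric.infDist x Ωᶜ) '' closure ω)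

open scoped BoundedContinuousFunction

theorem setDistToCompl_nonneg {n : ℕ} (ω Ω : Set (EuclideanSpace ℝ (Fin n))) :
    0 ≤ setDistToCompl ω Ω :=
  Real.sInf_nonneg (by rintro _ ⟨y, -, rfl⟩; exact infDist_nonneg)

theorem tendsto_of_squeeze_of_tendsto_bounds {ι κ α : Type*} [TopologicalSpace α]
    [LinearOrder α] [OrderTopology α] {l : Filter ι} {l' : Filter κ} [l'.NeBot] {u : ι → α} {a : α}
    {lo hi : κ → ι → α} {lo' hi' : κ → α}
    (hlo : ∀ m, Tendsto (lo m) l (𝓝 (lo' m))) (hhi : ∀ m, Tendsto (hi m) l (𝓝 (hi' m)))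
    (hlo' : Tendsto lo' l' (𝓝 a)) (hhi' : Tendsto hi' l' (𝓝 a))
    (hlo_le : ∀ m i, lo m i ≤ u i) (hle_hi : ∀ m i, u i ≤ hi m i) : Tendsto u l (𝓝 a) := by
  refine tendsto_order.2 ⟨fun b hb => ?_, fun b hb => ?_⟩
  · obtain ⟨m, hm⟩ := (hlo'.eventually (lt_mem_nhds hb)).exists
    exact ((hlo m).eventually (lt_mem_nhds hm)).mono fun i hi => hi.trans_le (hlo_le m i)
  · obtain ⟨m, hm⟩ := (hhi'.eventually (gt_mem_nhds hb)).exists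
    exact ((hhi m).eventually (gt_mem_nhds hm)).mono fun i hi => (hle_hi m i).trans_lt hi

theorem setIntegral_Ioo_le_of_le_shift_sub {F G : ℝ → ℝ} {R δ B : ℝ}
    (hF : IntegrableOn F (Ioo 0 R)) (hG : Monotone G) (hδ : 0 ≤ δ) (hG0 : ∀ r, 0 ≤ G r)
    (hGB : ∀ r, G r ≤ B) (hFG : ∀ r, F r ≤ G (r + δ) - G (r - δ)) :
    ∫ r in Ioo 0 R, F r ≤ 2 * δ * B := by
  have hB : 0 ≤ B := (hG0 0).trans (hGB 0)
  rcases le_or_gt R 0 with hR | hR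
  · rw [Ioo_eq_empty hR.not_gt, Measure.restrict_empty, integral_zero_measure]
    positivity
  have hGi : ∀ a b, IntervalIntegrable G volume a b := fun _ _ => hG.intervalIntegrable
  have hG_add : Monotone (G <| · + δ) := fun _ _ h => hG (by linarith)
  have hG_sub : Monotone (G <| · - δ) := fun _ _ h => hG (by linarith)
  refine (setIntegral_mono_on hF ((hG_add.intervalIntegrable.sub
    hG_sub.intervalIntegrable).1.mono_set Ioo_subset_Ioc_self) measurableSet_Ioo
    fun r _ => hFG r).trans ?_
  -- `∫₀ᴿ (G (r + δ) - G (r - δ)) dr = ∫_{R-δ}^{R+δ} G - ∫_{-δ}^{δ} G`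
  rw [← integral_Ioc_eq_integral_Ioo, ← intervalIntegral.integral_of_le hR.le,
    intervalIntegral.integral_sub hG_add.intervalIntegrable hG_sub.intervalIntegrable,
    intervalIntegral.integral_comp_add_right G δ, intervalIntegral.integral_comp_sub_right G δ,
    zero_add, zero_sub, intervalIntegral.integral_interval_sub_interval_comm' (hGi _ _) (hGi _ _)
      (hGi _ _)]
  have hcenter : 0 ≤ ∫ r in -δ..δ, G r :=
    intervalIntegral.integral_nonneg (by linarith) fun r _ => hG0 r
  have hedge : ∫ r in (R - δ)..(R + δ), G r ≤ 2 * δ * B := by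
    calc ∫ r in (R - δ)..(R + δ), G r ≤ ∫ _ in (R - δ)..(R + δ), B :=
          intervalIntegral.integral_mono_on (by linarith) (hGi _ _) intervalIntegrable_const
            fun r _ => hGB r
      _ = 2 * δ * B := by rw [intervalIntegral.integral_const, smul_eq_mul]; ring
  linarith

theorem setIntegral_abs_sub_le_add {α : Type*} [MeasurableSpace α] {μ : Measure α} {s : Set α}
    {f g h : α → ℝ} (hf : IntegrableOn f s μ) (hg : IntegrableOn g s μ)
    (hh : IntegrableOn h s μ) :
    ∫ a in s, |f a - h a| ∂μ ≤ ∫ a in s, |f a - g a| ∂μ + ∫ a in s, |g a - h a| ∂μ := by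
  refine (integral_mono (hf.sub hh).abs ((hf.sub hg).abs.add (hg.sub hh).abs)
    fun a => abs_sub_le _ _ _).trans_eq (integral_add (hf.sub hg).abs (hg.sub hh).abs)

theorem abs_setIntegral_sub_setIntegral_le {α : Type*} [MeasurableSpace α] {μ : Measure α}
    {f : α → ℝ} (hf : Integrable f μ) {s t u v : Set α} (hs : MeasurableSet s)
    (ht : MeasurableSet t) (hu : MeasurableSet u) (hv : MeasurableSet v) (hvs : v ⊆ s)
    (hvt : v ⊆ t) (hsu : s ⊆ u) (htu : t ⊆ u) :
    |∫ a in s, f a ∂μ - ∫ a in t, f a ∂μ| ≤ ∫ a in u, |f a| ∂μ - ∫ a in v, |f a| ∂μ := by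
  rw [← integral_indicator hs, ← integral_indicator ht,
    ← integral_sub (hf.indicator hs) (hf.indicator ht),
    ← setIntegral_sdiff hv hf.abs.integrableOn (hvs.trans hsu),
    ← integral_indicator (hu.diff hv)]
  refine (abs_integral_le_integral_abs).trans (integral_mono
    ((hf.indicator hs).sub (hf.indicator ht)).abs (hf.abs.indicator (hu.diff hv)) fun a => ?_)
  by_cases hav : a ∈ v
  · simpa [hvs hav, hvt hav] using indicator_nonneg (fun _ _ => abs_nonneg (f _)) a
  by_cases hau : a ∈ u
  · rw [indicator_of_mem (mem_sdiff_of_mem hau hav)]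
    by_cases has : a ∈ s <;> by_cases hat : a ∈ t <;> simp [has, hat]
  · have has : a ∉ s := fun h => hau (hsu h)
    have hat : a ∉ t := fun h => hau (htu h)
    simp [has, hat, hau]

theorem integral_abs_le_mul_measureReal_of_ae_mem {α : Type*} [MeasurableSpace α]
    {ν : Measure α} [IsFiniteMeasure ν] {S : Set α} (hνS : ∀ᵐ y ∂ν, y ∈ S) {f : α → ℝ}
    {c : ℝ} (hf : ∀ y ∈ S, |f y| ≤ c) :
    ∫ y, |f y| ∂ν ≤ c * ν.real univ := by
  have h := norm_integral_le_of_norm_le_const (f := fun y => |f y|)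
    (hνS.mono fun y hy => by simpa using hf y hy)
  exact (le_abs_self _).trans (by simpa using h)

theorem tendsto_integral_mul_of_tendsto_indicator {α : Type*} [MeasurableSpace α]
    {μ : Measure α} {ψ b : α → ℝ} {f : ℕ → α → ℝ} {s : Set α} (hs : MeasurableSet s)
    (hf : ∀ m, AEStronglyMeasurable (fun y => ψ y * f m y) μ) (hb : Integrable b μ)
    (hbound : ∀ m y, |ψ y * f m y| ≤ b y)
    (hlim : ∀ y, Tendsto (f · y) atTop (𝓝 (s.indicator 1 y))) :
    Tendsto (fun m => ∫ y, ψ y * f m y ∂μ) atTop (𝓝 (∫ y in s, ψ y ∂μ)) := by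
  rw [← integral_indicator hs]
  refine tendsto_integral_of_dominated_convergence b hf hb (fun m => ae_of_all _ (hbound m))
    (ae_of_all _ fun y => ?_)
  by_cases hy : y ∈ s <;> simpa [hy] using (hlim y).const_mul (ψ y)

theorem exists_forall_measureReal_restrict_le {α : Type*} [MeasurableSpace α]
    {μi : ℕ → Measure α} {μ : Measure α} {ω Ω : Set α} (hmass : (⨆ i, μi i Ω) ≠ ⊤)
    (hωΩ : ω ⊆ Ω) :
    ∃ M, (∀ i, ((μi i).restrict ω).real univ ≤ M) ∧ (μ.restrict ω).real univ ≤ M := by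
  refine ⟨(⨆ i, μi i Ω).toReal + (μ.restrict ω).real univ, fun i => ?_,
    le_add_of_nonneg_left ENNReal.toReal_nonneg⟩
  have := ENNReal.toReal_mono hmass ((measure_mono hωΩ).trans (le_iSup (fun j => μi j Ω) i))
  simp only [measureReal_def, Measure.restrict_apply_univ] at this ⊢
  linarith [ENNReal.toReal_nonneg (a := μ ω)]

theorem isFiniteMeasure_restrict_of_isCompact_closure {X : Type*} [TopologicalSpace X]
    [MeasurableSpace X] {ν : Measure X} [IsFiniteMeasureOnCompacts ν] {ω : Set X}
    (hω : IsCompact (closure ω)) : IsFiniteMeasure (ν.restrict ω) :=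
  isFiniteMeasure_restrict.2 ((measure_mono subset_closure).trans_lt hω.measure_lt_top).ne

section BallIntegral

variable {E : Type*} [PseudoMetricSpace E] [MeasurableSpace E]

noncomputable def ballIntegral (ν : Measure E) (ψ : E → ℝ) (x : E) (r : ℝ) : ℝ :=
  ∫ y in ball x r, ψ y ∂ν

/-- `Δ(ν, ν')` is the supremum of `ballDiscrepancy ν ν' R ψ x` over the admissible `ψ` and
`x ∈ ω̄`, with `R = d(ω̄, Ωᶜ)/2` and `ν, ν'` the measures restricted to `ω`. -/
noncomputable def ballDiscrepancy (ν ν' : Measure E) (R : ℝ) (ψ : E → ℝ) (x : E) : ℝ :=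
  ∫ r in Ioo 0 R, |ballIntegral ν ψ x r - ballIntegral ν' ψ x r|

variable {ν : Measure E} {ψ g : E → ℝ} {x z : E} {r δ R : ℝ}

theorem abs_ballIntegral_le (hψ : Integrable ψ ν) : |ballIntegral ν ψ x r| ≤ ∫ y, |ψ y| ∂ν :=
  abs_integral_le_integral_abs.trans
    (setIntegral_le_integral hψ.abs (ae_of_all _ fun _ => abs_nonneg _))

theorem monotone_ballIntegral (hψ : Integrable ψ ν) (hψ0 : 0 ≤ ψ) :
    Monotone (ballIntegral ν ψ x) := fun _ _ hrr' =>
  setIntegral_mono_set hψ.integrableOn (ae_of_all _ hψ0) (ball_subset_ball hrr').eventuallyLE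

variable [OpensMeasurableSpace E]

theorem setIntegral_ball_inter_eq_ballIntegral_restrict {ω : Set E} (hω : MeasurableSet ω)
    {φ : E → ℝ} (hφψ : EqOn φ ψ ω) :
    ∫ y in ball x r ∩ ω, φ y ∂ν = ballIntegral (ν.restrict ω) ψ x r := by
  rw [ballIntegral, Measure.restrict_restrict measurableSet_ball]
  exact setIntegral_congr_fun (measurableSet_ball.inter hω) fun y hy => hφψ hy.2

theorem abs_ballIntegral_sub_le_of_dist_le (hψ : Integrable ψ ν) (hxz : dist x z ≤ δ)
    (r : ℝ) :
    |ballIntegral ν ψ x r - ballIntegral ν ψ z r| ≤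
      ballIntegral ν (|ψ ·|) z (r + δ) - ballIntegral ν (|ψ ·|) z (r - δ) := by
  have hδ : 0 ≤ δ := dist_nonneg.trans hxz
  have hzx : dist z x ≤ δ := dist_comm x z ▸ hxz
  -- `B_{r-δ}(z) ⊆ B_r(x) ∩ B_r(z)` and `B_r(x) ∪ B_r(z) ⊆ B_{r+δ}(z)`
  exact abs_setIntegral_sub_setIntegral_le hψ measurableSet_ball measurableSet_ball
    measurableSet_ball measurableSet_ball (ball_subset_ball' (by linarith))
    (ball_subset_ball (by linarith)) (ball_subset_ball' (by linarith))
    (ball_subset_ball (by linarith))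

theorem monotone_ballIntegral_add_abs (hψ : Integrable ψ ν) :
    Monotone (ballIntegral ν ψ x + ballIntegral ν (|ψ ·|) x) := fun r r' hrr' => by
  have := abs_setIntegral_sub_setIntegral_le hψ measurableSet_ball measurableSet_ball
    measurableSet_ball measurableSet_ball (ball_subset_ball (x := x) hrr') subset_rfl subset_rfl
    (ball_subset_ball hrr')
  simp only [Pi.add_apply, ballIntegral]
  linarith [neg_abs_le (∫ y in ball x r', ψ y ∂ν - ∫ y in ball x r, ψ y ∂ν)]

theorem integrableOn_ballIntegral (hψ : Integrable ψ ν) (R : ℝ) :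
    IntegrableOn (ballIntegral ν ψ x) (Ioo 0 R) := by
  -- a difference of two monotone functions
  have h := (monotone_ballIntegral_add_abs hψ (x := x)).intervalIntegrable.sub
    (monotone_ballIntegral hψ.abs (fun _ => abs_nonneg _) (x := x)).intervalIntegrable
    (μ := volume) (a := 0) (b := R)
  simpa using h.1.mono_set Ioo_subset_Ioc_self

theorem setIntegral_abs_ballIntegral_sub_le_of_dist_le (hψ : Integrable ψ ν)
    (hxz : dist x z ≤ δ) :
    ∫ r in Ioo 0 R, |ballIntegral ν ψ x r - ballIntegral ν ψ z r| ≤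
      2 * δ * ∫ y, |ψ y| ∂ν :=
  setIntegral_Ioo_le_of_le_shift_sub
    ((integrableOn_ballIntegral hψ R).sub (integrableOn_ballIntegral hψ R)).abs
    (monotone_ballIntegral hψ.abs fun _ => abs_nonneg _) (dist_nonneg.trans hxz)
    (fun _ => setIntegral_nonneg measurableSet_ball fun _ _ => abs_nonneg _)
    (fun _ => (le_abs_self _).trans ((abs_ballIntegral_le hψ.abs).trans_eq (by simp)))
    (abs_ballIntegral_sub_le_of_dist_le hψ hxz)

theorem setIntegral_abs_ballIntegral_sub_le (hψ : Integrable ψ ν) (hg : Integrable g ν)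
    (hR : 0 ≤ R) (hxz : dist x z ≤ δ) :
    ∫ r in Ioo 0 R, |ballIntegral ν ψ x r - ballIntegral ν g z r| ≤
      R * ∫ y, |ψ y - g y| ∂ν + 2 * δ * ∫ y, |g y| ∂ν := by
  refine (setIntegral_abs_sub_le_add (integrableOn_ballIntegral hψ R)
    (integrableOn_ballIntegral hg R) (integrableOn_ballIntegral hg R)).trans
    (add_le_add ?_ (setIntegral_abs_ballIntegral_sub_le_of_dist_le hg hxz))
  have hsub : ∀ r, ballIntegral ν ψ x r - ballIntegral ν g x r = ballIntegral ν (ψ - g) x r :=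
    fun r => (integral_sub hψ.integrableOn hg.integrableOn).symm
  calc ∫ r in Ioo 0 R, |ballIntegral ν ψ x r - ballIntegral ν g x r|
      ≤ ∫ _ in Ioo 0 R, ∫ y, |ψ y - g y| ∂ν :=
        setIntegral_mono_on ((integrableOn_ballIntegral hψ R).sub
          (integrableOn_ballIntegral hg R)).abs (integrableOn_const measure_Ioo_lt_top.ne)
          measurableSet_Ioo fun r _ => (hsub r).symm ▸ abs_ballIntegral_le (hψ.sub hg)
    _ = R * ∫ y, |ψ y - g y| ∂ν := by simp [hR]

theorem ballDiscrepancy_le_add {ν' : Measure E} (hψ : Integrable ψ ν) (hψ' : Integrable ψ ν')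
    (hg : Integrable g ν) (hg' : Integrable g ν') (hR : 0 ≤ R) (hxz : dist x z ≤ δ) :
    ballDiscrepancy ν ν' R ψ x ≤ ballDiscrepancy ν ν' R g z +
      (R * ∫ y, |ψ y - g y| ∂ν + 2 * δ * ∫ y, |g y| ∂ν) +
      (R * ∫ y, |ψ y - g y| ∂ν' + 2 * δ * ∫ y, |g y| ∂ν') := by
  have h₁ := setIntegral_abs_sub_le_add (integrableOn_ballIntegral hψ R (x := x))
    (integrableOn_ballIntegral hg R (x := z)) (integrableOn_ballIntegral hψ' R (x := x))
  have h₂ := setIntegral_abs_sub_le_add (integrableOn_ballIntegral hg R (x := z))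
    (integrableOn_ballIntegral hg' R (x := z)) (integrableOn_ballIntegral hψ' R (x := x))
  have h₃ := setIntegral_abs_ballIntegral_sub_le hψ hg hR hxz
  have h₄ := setIntegral_abs_ballIntegral_sub_le hψ' hg' hR hxz
  simp only [abs_sub_comm (ballIntegral ν' g z _)] at h₂
  unfold ballDiscrepancy
  linarith

theorem tendsto_ballDiscrepancy_of_ae_tendsto {νi : ℕ → Measure E} {ν : Measure E} {M : ℝ}
    (hψi : ∀ i, Integrable ψ (νi i)) (hψ : Integrable ψ ν) (hM : ∀ i, ∫ y, |ψ y| ∂(νi i) ≤ M)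
    (h : ∀ᵐ r, Tendsto (fun i => ballIntegral (νi i) ψ x r) atTop (𝓝 (ballIntegral ν ψ x r)))
    (R : ℝ) : Tendsto (fun i => ballDiscrepancy (νi i) ν R ψ x) atTop (𝓝 0) := by
  have hdom : Tendsto (fun i => ballDiscrepancy (νi i) ν R ψ x) atTop
      (𝓝 (∫ r in Ioo 0 R, |ballIntegral ν ψ x r - ballIntegral ν ψ x r|)) :=
    tendsto_integral_of_dominated_convergence (fun _ => M + ∫ y, |ψ y| ∂ν)
      (fun i => ((integrableOn_ballIntegral (hψi i) R (x := x)).sub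
        (integrableOn_ballIntegral hψ R)).abs.aestronglyMeasurable)
      (integrableOn_const measure_Ioo_lt_top.ne)
      (fun i => ae_of_all _ fun r => by
        rw [Real.norm_eq_abs, abs_abs]
        exact (abs_sub _ _).trans
          (add_le_add ((abs_ballIntegral_le (hψi i)).trans (hM i)) (abs_ballIntegral_le hψ)))
      (ae_restrict_of_ae (h.mono fun r hr => (hr.sub_const _).abs))
  simpa using hdom

end BallIntegral

section Lipschitz

variable {E : Type*} [PseudoMetricSpace E]

theorem exists_finite_lipschitz_net {S : Set E} (hS : IsCompact S) (k : ℝ≥0) (C : ℝ) {ε : ℝ}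
    (hε : 0 < ε) :
    ∃ Ψ ⊆ {ψ : E → ℝ | LipschitzWith k ψ ∧ ∀ y, |ψ y| ≤ C}, Ψ.Finite ∧
      ∀ ψ ∈ {ψ : E → ℝ | LipschitzWith k ψ ∧ ∀ y, |ψ y| ≤ C}, ∃ g ∈ Ψ, ∀ y ∈ S,
        |ψ y - g y| < ε := by
  set F := {ψ : E → ℝ | LipschitzWith k ψ ∧ ∀ y, |ψ y| ≤ C}
  have : CompactSpace S := isCompact_iff_compactSpace.1 hS
  let res : F → S →ᵇ ℝ := fun ψ =>
    .mkOfCompact ⟨fun y => ψ.1 y, ψ.2.1.continuous.comp continuous_subtype_val⟩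
  have hres : IsCompact (closure (range res)) := by
    refine BoundedContinuousFunction.arzela_ascoli (Icc (-C) C) isCompact_Icc _ ?_ ?_
    · rintro _ y ⟨ψ, rfl⟩
      exact abs_le.1 (ψ.2.2 y)
    · refine (LipschitzWith.uniformEquicontinuous _ k ?_).equicontinuous
      rintro ⟨_, ψ, rfl⟩
      exact mul_one k ▸ ψ.2.1.comp (LipschitzWith.subtype_val S)
  obtain ⟨t, htres, htfin, hcover⟩ :=
    finite_approx_of_totallyBounded (hres.totallyBounded.subset subset_closure) ε hε
  rw [← image_univ] at htres
  obtain ⟨u, -, hufin, rfl⟩ := exists_subset_image_finite_and.1 ⟨t, htres, htfin, rfl⟩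
  refine ⟨Subtype.val '' u, image_subset_iff.2 fun ψ _ => ψ.2, hufin.image _, fun ψ hψ => ?_⟩
  obtain ⟨_, ⟨g, hg, rfl⟩, hd⟩ := mem_iUnion₂.1 (hcover (mem_range_self ⟨ψ, hψ⟩))
  refine ⟨g, mem_image_of_mem _ hg, fun y hy => ?_⟩
  exact (BoundedContinuousFunction.dist_coe_le_dist ⟨y, hy⟩).trans_lt hd

theorem LipschitzOnWith.exists_lipschitzWith_abs_le {f : E → ℝ} {s : Set E} {k : ℝ≥0}
    (hf : LipschitzOnWith k f s) {C : ℝ} (hC : 0 ≤ C) (hfC : ∀ y ∈ s, |f y| ≤ C) :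
    ∃ g : E → ℝ, LipschitzWith k g ∧ (∀ y, |g y| ≤ C) ∧ EqOn f g s := by
  obtain ⟨g, hg, hfg⟩ := hf.extend_real
  refine ⟨fun y => max (min (g y) C) (-C), (hg.min_const C).max_const (-C),
    fun y => abs_le.2 ⟨le_max_right _ _, max_le (min_le_right _ _) (by linarith)⟩,
    fun y hy => ?_⟩
  obtain ⟨hlo, hhi⟩ := abs_le.1 (hfC y hy)
  simp [← hfg hy, hlo, hhi]

end Lipschitz

theorem eventually_forall_ballDiscrepancy_le {E : Type*} [PseudoMetricSpace E]
    [MeasurableSpace E] [OpensMeasurableSpace E] {ν : ℕ → Measure E} [∀ i, IsFiniteMeasure (ν i)]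
    {ν' : Measure E} [IsFiniteMeasure ν'] {S : Set E} (hS : IsCompact S)
    (hνS : ∀ i, ∀ᵐ y ∂(ν i), y ∈ S) (hν'S : ∀ᵐ y ∂ν', y ∈ S) {M : ℝ}
    (hM : ∀ i, (ν i).real univ ≤ M) (hM' : ν'.real univ ≤ M) {k : ℝ≥0} {C R : ℝ} (hR : 0 ≤ R)
    (hlim : ∀ ψ ∈ {ψ : E → ℝ | LipschitzWith k ψ ∧ ∀ y, |ψ y| ≤ C}, ∀ z ∈ S,
      Tendsto (fun i => ballDiscrepancy (ν i) ν' R ψ z) atTop (𝓝 0))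
    {ε : ℝ} (hε : 0 < ε) :
    ∀ᶠ i in atTop, ∀ ψ ∈ {ψ : E → ℝ | LipschitzWith k ψ ∧ ∀ y, |ψ y| ≤ C}, ∀ x ∈ S,
      ballDiscrepancy (ν i) ν' R ψ x ≤ ε := by
  obtain ⟨η, hη, hηε⟩ := exists_pos_mul_lt (half_pos hε) (2 * M * (R + 2 * C))
  obtain ⟨Ψ, hΨF, hΨfin, hΨ⟩ := exists_finite_lipschitz_net hS k C hη
  obtain ⟨T, hTS, hTfin, hT⟩ := finite_cover_balls_of_compact hS hη
  have hnet : ∀ᶠ i in atTop, ∀ g ∈ Ψ, ∀ z ∈ T, ballDiscrepancy (ν i) ν' R g z < ε / 2 :=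
    (eventually_all_finite hΨfin).2 fun g hg => (eventually_all_finite hTfin).2 fun z hz =>
      (hlim g (hΨF hg) z (hTS hz)).eventually_lt_const (half_pos hε)
  -- compare `(ψ, x)` with a net point `(g, z)`: the error is `2 M (R + 2 C) η < ε / 2`
  filter_upwards [hnet] with i hi ψ hψ x hx
  obtain ⟨g, hgΨ, hψg⟩ := hΨ ψ hψ
  obtain ⟨z, hzT, hxz⟩ := mem_iUnion₂.1 (hT hx)
  have hC : 0 ≤ C := (abs_nonneg _).trans (hψ.2 x)
  have hint : ∀ f ∈ {ψ : E → ℝ | LipschitzWith k ψ ∧ ∀ y, |ψ y| ≤ C},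
      ∀ (μ : Measure E) [IsFiniteMeasure μ], Integrable f μ := fun f hf μ _ =>
    .of_bound hf.1.continuous.aestronglyMeasurable C (ae_of_all _ hf.2)
  have herr : ∀ (μ : Measure E) [IsFiniteMeasure μ], (∀ᵐ y ∂μ, y ∈ S) → μ.real univ ≤ M →
      R * ∫ y, |ψ y - g y| ∂μ + 2 * η * ∫ y, |g y| ∂μ ≤ M * (R + 2 * C) * η := by
    intro μ _ hμS hμM
    have h₁ := integral_abs_le_mul_measureReal_of_ae_mem hμS fun y hy => (hψg y hy).le
    have h₂ := integral_abs_le_mul_measureReal_of_ae_mem hμS fun y _ => (hΨF hgΨ).2 y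
    calc R * ∫ y, |ψ y - g y| ∂μ + 2 * η * ∫ y, |g y| ∂μ
        ≤ R * (η * M) + 2 * η * (C * M) := by
          gcongr
          exacts [h₁.trans (by gcongr), h₂.trans (by gcongr)]
      _ = M * (R + 2 * C) * η := by ring
  calc ballDiscrepancy (ν i) ν' R ψ x
      ≤ ballDiscrepancy (ν i) ν' R g z +
          (R * ∫ y, |ψ y - g y| ∂(ν i) + 2 * η * ∫ y, |g y| ∂(ν i)) +
          (R * ∫ y, |ψ y - g y| ∂ν' + 2 * η * ∫ y, |g y| ∂ν') :=
        ballDiscrepancy_le_add (hint ψ hψ _) (hint ψ hψ _) (hint g (hΨF hgΨ) _)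
          (hint g (hΨF hgΨ) _) hR (mem_ball.1 hxz).le
    _ ≤ ε / 2 + M * (R + 2 * C) * η + M * (R + 2 * C) * η := by
        gcongr
        exacts [(hi g hgΨ z hzT).le, herr _ (hνS i) (hM i), herr _ hν'S hM']
    _ ≤ ε := by linarith

section Cutoff

variable {X : Type*} [MetricSpace X]

theorem IsCompact.exists_seq_cutoff_tendsto_indicator [ProperSpace X] {K U : Set X}
    (hK : IsCompact K) (hU : IsOpen U) (hKU : K ⊆ U) :
    ∃ g : ℕ → X → ℝ, (∀ m, Continuous (g m) ∧ HasCompactSupport (g m) ∧ tsupport (g m) ⊆ U) ∧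
      (∀ m, 0 ≤ g m ∧ g m ≤ g 0 ∧ EqOn (g m) 1 K) ∧
      ∀ y, Tendsto (g · y) atTop (𝓝 (K.indicator 1 y)) := by
  obtain ⟨t, ht, htU⟩ := hK.exists_cthickening_subset_open hU hKU
  obtain ⟨δ, hδ_anti, hδ, hδ_lim⟩ := exists_seq_strictAnti_tendsto' ht
  have hδ_pos : ∀ m, 0 < δ m := fun m => (hδ m).1
  have hzero : ∀ m, ∀ y ∉ cthickening t K, thickenedIndicator (hδ_pos m) K y = 0 :=
    fun m y hy => thickenedIndicator_zero _ _ fun hy' =>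
      hy (thickening_subset_cthickening_of_le (hδ m).2.le _ hy')
  have htsupp : ∀ m, tsupport (fun y => (thickenedIndicator (hδ_pos m) K y : ℝ)) ⊆
      cthickening t K := fun m =>
    closure_minimal (Function.support_subset_iff'.2 fun y hy => by simp [hzero m y hy])
      isClosed_cthickening
  refine ⟨fun m y => thickenedIndicator (hδ_pos m) K y,
    fun m => ⟨?_, ?_, (htsupp m).trans htU⟩,
    fun m => ⟨fun y => by simp, fun y => ?_, fun y hy => ?_⟩, fun y => ?_⟩
  · exact NNReal.continuous_coe.comp (thickenedIndicator (hδ_pos m) K).continuous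
  · exact hK.cthickening.of_isClosed_subset (isClosed_tsupport _) (htsupp m)
  · exact NNReal.coe_le_coe.2
      (thickenedIndicator_mono _ _ (hδ_anti.antitone (Nat.zero_le m)) K y)
  · simp [thickenedIndicator_one_of_mem_closure _ _ (subset_closure hy)]
  · have h := tendsto_pi_nhds.1
      (thickenedIndicator_tendsto_indicator_closure hδ_pos hδ_lim K) y
    rw [hK.isClosed.closure_eq] at h
    by_cases hy : y ∈ K <;> simpa [hy] using NNReal.tendsto_coe.2 h

theorem IsOpen.exists_seq_cutoff_tendsto_indicator {U : Set X} (hU : IsOpen U)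
    (hcU : IsCompact (closure U)) :
    ∃ h : ℕ → X → ℝ,
      (∀ m, Continuous (h m) ∧ HasCompactSupport (h m) ∧ tsupport (h m) ⊆ closure U) ∧
      (∀ m, 0 ≤ h m ∧ h m ≤ 1 ∧ ∀ y ∉ U, h m y = 0) ∧
      ∀ y, Tendsto (h · y) atTop (𝓝 (U.indicator 1 y)) := by
  have hδ_pos : ∀ m : ℕ, 0 < 1 / ((m : ℝ) + 1) := fun m => Nat.one_div_pos_of_nat
  have hzero : ∀ m, ∀ y ∉ U, 1 - (thickenedIndicator (hδ_pos m) Uᶜ y : ℝ) = 0 :=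
    fun m y hy => by
      simp [thickenedIndicator_one_of_mem_closure _ _ (subset_closure (mem_compl hy))]
  have htsupp : ∀ m, tsupport (fun y => 1 - (thickenedIndicator (hδ_pos m) Uᶜ y : ℝ)) ⊆
      closure U := fun m =>
    closure_mono (Function.support_subset_iff'.2 (hzero m))
  refine ⟨fun m y => 1 - thickenedIndicator (hδ_pos m) Uᶜ y,
    fun m => ⟨?_, hcU.of_isClosed_subset (isClosed_tsupport _) (htsupp m), htsupp m⟩,
    fun m => ⟨fun y => ?_, fun y => ?_, hzero m⟩, fun y => ?_⟩
  · exact continuous_const.sub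
      (NNReal.continuous_coe.comp (thickenedIndicator (hδ_pos m) Uᶜ).continuous)
  · simpa using thickenedIndicator_le_one (hδ_pos m) Uᶜ y
  · simp
  · have h := tendsto_pi_nhds.1 (thickenedIndicator_tendsto_indicator_closure hδ_pos
      tendsto_one_div_add_atTop_nhds_zero_nat Uᶜ) y
    rw [hU.isClosed_compl.closure_eq] at h
    by_cases hy : y ∈ U <;> simpa [hy] using (NNReal.tendsto_coe.2 h).const_sub 1

end Cutoff

section WeakStar

variable {n : ℕ} {Ω : Set (EuclideanSpace ℝ (Fin n))}
  {μi : ℕ → Measure (EuclideanSpace ℝ (Fin n))} {μ : Measure (EuclideanSpace ℝ (Fin n))}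
  [∀ i, IsFiniteMeasureOnCompacts (μi i)] [IsFiniteMeasureOnCompacts μ]

theorem WeakStarTendsto.tendsto_setIntegral_of_nonneg (hw : WeakStarTendsto μi μ Ω)
    (hΩ : IsOpen Ω) {A : Set (EuclideanSpace ℝ (Fin n))} (hA : IsCompact (closure A))
    (hAΩ : closure A ⊆ Ω) (hfr : μ (frontier A) = 0) {ψ : EuclideanSpace ℝ (Fin n) → ℝ}
    (hψ : Continuous ψ) (hψ0 : 0 ≤ ψ) :
    Tendsto (fun i => ∫ y in A, ψ y ∂(μi i)) atTop (𝓝 (∫ y in A, ψ y ∂μ)) := by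
  obtain ⟨g, hg, hg_le, hg_lim⟩ := hA.exists_seq_cutoff_tendsto_indicator hΩ hAΩ
  obtain ⟨h, hh, hh_le, hh_lim⟩ := isOpen_interior.exists_seq_cutoff_tendsto_indicator
    (hA.of_isClosed_subset isClosed_closure (closure_mono interior_subset))
  have hint : ∀ (ν : Measure (EuclideanSpace ℝ (Fin n))) [IsFiniteMeasureOnCompacts ν],
      IntegrableOn ψ (closure A) ν := fun ν _ => hψ.continuousOn.integrableOn_compact hA
  have hψg : ∀ m, Continuous (fun y => ψ y * g m y) ∧
      HasCompactSupport (fun y => ψ y * g m y) := fun m => ⟨hψ.mul (hg m).1, (hg m).2.1.mul_left⟩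
  have hψh : ∀ m, Continuous (fun y => ψ y * h m y) ∧
      HasCompactSupport (fun y => ψ y * h m y) := fun m => ⟨hψ.mul (hh m).1, (hh m).2.1.mul_left⟩
  have hbound : Integrable (fun y => |ψ y| * g 0 y) μ :=
    (hψ.abs.mul (hg 0).1).integrable_of_hasCompactSupport (hg 0).2.1.mul_left
  -- `∫ ψ h_m ≤ ∫_A ψ ≤ ∫ ψ g_m` with `h_m → 1_{int A}` and `g_m → 1_{cl A}`; as `μ (∂A) = 0`,
  -- both bounds tend to `∫_A ψ dμ` when first `i → ∞` and then `m → ∞`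
  refine tendsto_of_squeeze_of_tendsto_bounds (l' := atTop)
    (lo := fun m i => ∫ y, ψ y * h m y ∂(μi i)) (hi := fun m i => ∫ y, ψ y * g m y ∂(μi i))
    (fun m => hw _ (hψh m).1 (hψh m).2 (tsupport_mul_subset_right.trans
      ((hh m).2.2.trans ((closure_mono interior_subset).trans hAΩ))))
    (fun m => hw _ (hψg m).1 (hψg m).2 (tsupport_mul_subset_right.trans (hg m).2.2)) ?_ ?_
    (fun m i => ?_) (fun m i => ?_)
  · rw [setIntegral_congr_set (interior_ae_eq_of_null_frontier hfr).symm]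
    refine tendsto_integral_mul_of_tendsto_indicator isOpen_interior.measurableSet
      (fun m => (hψh m).1.aestronglyMeasurable) hbound (fun m y => ?_) hh_lim
    by_cases hy : y ∈ interior A
    · rw [(hg_le 0).2.2 (interior_subset.trans subset_closure hy), abs_mul,
        abs_of_nonneg ((hh_le m).1 y)]
      simpa using mul_le_mul_of_nonneg_left ((hh_le m).2.1 y) (abs_nonneg (ψ y))
    · rw [(hh_le m).2.2 y hy, mul_zero, abs_zero]
      exact mul_nonneg (abs_nonneg _) ((hg_le 0).1 y)
  · rw [setIntegral_congr_set (closure_ae_eq_of_null_frontier hfr).symm]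
    refine tendsto_integral_mul_of_tendsto_indicator isClosed_closure.measurableSet
      (fun m => (hψg m).1.aestronglyMeasurable) hbound (fun m y => ?_) hg_lim
    rw [abs_mul, abs_of_nonneg ((hg_le m).1 y)]
    exact mul_le_mul_of_nonneg_left ((hg_le m).2.1 y) (abs_nonneg _)
  · calc ∫ y, ψ y * h m y ∂(μi i) = ∫ y in A, ψ y * h m y ∂(μi i) :=
          (setIntegral_eq_integral_of_forall_compl_eq_zero fun y hy => by
            rw [(hh_le m).2.2 y fun hy' => hy (interior_subset hy'), mul_zero]).symm
      _ ≤ ∫ y in A, ψ y ∂(μi i) :=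
          setIntegral_mono ((hψh m).1.integrable_of_hasCompactSupport (hψh m).2).integrableOn
            ((hint _).mono_set subset_closure)
            fun y => mul_le_of_le_one_right (hψ0 y) ((hh_le m).2.1 y)
  · calc ∫ y in A, ψ y ∂(μi i) ≤ ∫ y in closure A, ψ y ∂(μi i) :=
          setIntegral_mono_set (hint _) (ae_of_all _ hψ0) subset_closure.eventuallyLE
      _ = ∫ y in closure A, ψ y * g m y ∂(μi i) :=
          setIntegral_congr_fun isClosed_closure.measurableSet fun y hy => by
            simp [(hg_le m).2.2 hy]
      _ ≤ ∫ y, ψ y * g m y ∂(μi i) :=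
          setIntegral_le_integral ((hψg m).1.integrable_of_hasCompactSupport (hψg m).2)
            (ae_of_all _ fun y => mul_nonneg (hψ0 y) ((hg_le m).1 y))

theorem WeakStarTendsto.tendsto_setIntegral (hw : WeakStarTendsto μi μ Ω) (hΩ : IsOpen Ω)
    {A : Set (EuclideanSpace ℝ (Fin n))} (hA : IsCompact (closure A)) (hAΩ : closure A ⊆ Ω)
    (hfr : μ (frontier A) = 0) {ψ : EuclideanSpace ℝ (Fin n) → ℝ} (hψ : Continuous ψ) :
    Tendsto (fun i => ∫ y in A, ψ y ∂(μi i)) atTop (𝓝 (∫ y in A, ψ y ∂μ)) := by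
  have hψ₁ : Continuous fun y => max (ψ y) 0 := hψ.max continuous_const
  have hψ₂ : Continuous fun y => max (-ψ y) 0 := hψ.neg.max continuous_const
  have hsplit : ∀ (ν : Measure (EuclideanSpace ℝ (Fin n))) [IsFiniteMeasureOnCompacts ν],
      ∫ y in A, ψ y ∂ν = ∫ y in A, max (ψ y) 0 ∂ν - ∫ y in A, max (-ψ y) 0 ∂ν := fun ν _ => by
    rw [← integral_sub ((hψ₁.continuousOn.integrableOn_compact hA).mono_set subset_closure)
      ((hψ₂.continuousOn.integrableOn_compact hA).mono_set subset_closure)]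
    simp only [max_zero_sub_max_neg_zero_eq_self]
  simpa only [hsplit] using
    (hw.tendsto_setIntegral_of_nonneg hΩ hA hAΩ hfr hψ₁ fun y => le_max_right _ _).sub
      (hw.tendsto_setIntegral_of_nonneg hΩ hA hAΩ hfr hψ₂ fun y => le_max_right _ _)

theorem WeakStarTendsto.ae_tendsto_ballIntegral (hw : WeakStarTendsto μi μ Ω) (hΩ : IsOpen Ω)
    {ω : Set (EuclideanSpace ℝ (Fin n))} (hωcpt : IsCompact (closure ω)) (hωΩ : closure ω ⊆ Ω)
    (hbdry : μ (frontier ω) = 0) {ψ : EuclideanSpace ℝ (Fin n) → ℝ} (hψ : Continuous ψ)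
    (z : EuclideanSpace ℝ (Fin n)) :
    ∀ᵐ r, Tendsto (fun i => ballIntegral ((μi i).restrict ω) ψ z r) atTop
      (𝓝 (ballIntegral (μ.restrict ω) ψ z r)) := by
  -- the spheres `∂B_r(z)` are disjoint, so only countably many of them carry mass
  have hsphere : {r : ℝ | 0 < μ (frontier (ball z r))}.Countable := by
    simpa only [thickening_singleton] using Measure.countable_meas_pos_of_disjoint_iUnion
      (fun r => isClosed_frontier.measurableSet) (frontier_thickening_disjoint {z})
  filter_upwards [hsphere.ae_notMem volume] with r hr
  have hfr : μ (frontier (ball z r ∩ ω)) = 0 :=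
    measure_mono_null ((frontier_inter_subset _ _).trans
      (union_subset_union inter_subset_left inter_subset_right))
      (measure_union_null (nonpos_iff_eq_zero.1 (not_lt.1 hr)) hbdry)
  have hcl : closure (ball z r ∩ ω) ⊆ closure ω := closure_mono inter_subset_right
  simp only [ballIntegral, Measure.restrict_restrict measurableSet_ball]
  exact hw.tendsto_setIntegral hΩ (hωcpt.of_isClosed_subset isClosed_closure hcl)
    (hcl.trans hωΩ) hfr hψ

theorem WeakStarTendsto.tendsto_ballDiscrepancy (hw : WeakStarTendsto μi μ Ω) (hΩ : IsOpen Ω)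
    {ω : Set (EuclideanSpace ℝ (Fin n))} (hωcpt : IsCompact (closure ω)) (hωΩ : closure ω ⊆ Ω)
    (hbdry : μ (frontier ω) = 0) {M : ℝ} (hM : ∀ i, ((μi i).restrict ω).real univ ≤ M)
    {ψ : EuclideanSpace ℝ (Fin n) → ℝ} (hψ : Continuous ψ) {C : ℝ} (hψC : ∀ y, |ψ y| ≤ C)
    (R : ℝ) (z : EuclideanSpace ℝ (Fin n)) :
    Tendsto (fun i => ballDiscrepancy ((μi i).restrict ω) (μ.restrict ω) R ψ z) atTop
      (𝓝 0) := by
  have := isFiniteMeasure_restrict_of_isCompact_closure (ν := μ) hωcpt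
  have := fun i => isFiniteMeasure_restrict_of_isCompact_closure (ν := μi i) hωcpt
  have hC : 0 ≤ C := (abs_nonneg _).trans (hψC 0)
  exact tendsto_ballDiscrepancy_of_ae_tendsto
    (fun i => .of_bound hψ.aestronglyMeasurable C (ae_of_all _ hψC))
    (.of_bound hψ.aestronglyMeasurable C (ae_of_all _ hψC))
    (fun i => (integral_abs_le_mul_measureReal_of_ae_mem (ae_of_all _ mem_univ)
      fun y _ => hψC y).trans (mul_le_mul_of_nonneg_left (hM i) hC))
    (hw.ae_tendsto_ballIntegral hΩ hωcpt hωΩ hbdry hψ z) R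

end WeakStar

/-- Let `μ_i ⇀* μ` in an open `Ω ⊆ ℝⁿ` with `sup_i μ_i(Ω) < ∞`, and let
`ω ⊂⊂ Ω` be open with `μ(∂ω) = 0`. Then the quantity
`Δ(μ_i, μ) = sup_{φ ∈ Lip_k(ω), ‖φ‖_∞ ≤ C, x ∈ ω̄} ∫₀^{d(ω̄,Ωᶜ)/2} |∫_{B_r(x)∩ω} φ dμ_i −
∫_{B_r(x)∩ω} φ dμ| dr` tends to `0`. -/
theorem delta_tendsto_zero {n : ℕ}
    (Ω : Set (EuclideanSpace ℝ (Fin n))) (hΩ : IsOpen Ω)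
    (μi : ℕ → Measure (EuclideanSpace ℝ (Fin n))) (μ : Measure (EuclideanSpace ℝ (Fin n)))
    [∀ i, IsFiniteMeasureOnCompacts (μi i)] [IsFiniteMeasureOnCompacts μ]
    (hw : WeakStarTendsto μi μ Ω)
    (hmass : (⨆ i, μi i Ω) ≠ ⊤)
    (ω : Set (EuclideanSpace ℝ (Fin n))) (hω : IsOpen ω)
    (hωcpt : IsCompact (closure ω)) (hωΩ : closure ω ⊆ Ω)
    (hbdry : μ (frontier ω) = 0)
    (k : ℝ≥0) (C : ℝ) (hC : 0 ≤ C) :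
    ∀ ε > (0 : ℝ), ∃ N : ℕ, ∀ i ≥ N, ∀ φ : EuclideanSpace ℝ (Fin n) → ℝ,
      LipschitzOnWith k φ ω → (∀ y ∈ ω, |φ y| ≤ C) →
      ∀ x ∈ closure ω,
        (∫ r in Set.Ioo (0 : ℝ) (setDistToCompl ω Ω / 2),
          |(∫ y in Metric.ball x r ∩ ω, φ y ∂(μi i)) -
            ∫ y in Metric.ball x r ∩ ω, φ y ∂μ|) ≤ ε := by
  intro ε hε
  have := isFiniteMeasure_restrict_of_isCompact_closure (ν := μ) hωcpt
  have := fun i => isFiniteMeasure_restrict_of_isCompact_closure (ν := μi i) hωcpt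
  have hmem : ∀ ν : Measure (EuclideanSpace ℝ (Fin n)), ∀ᵐ y ∂(ν.restrict ω), y ∈ closure ω :=
    fun ν => (ae_restrict_mem hω.measurableSet).mono fun _ => (subset_closure ·)
  obtain ⟨M, hM, hM'⟩ :=
    exists_forall_measureReal_restrict_le (μ := μ) hmass (subset_closure.trans hωΩ)
  obtain ⟨N, hN⟩ := eventually_atTop.1 (eventually_forall_ballDiscrepancy_le hωcpt
    (fun i => hmem _) (hmem _) hM hM' (div_nonneg (setDistToCompl_nonneg ω Ω) zero_le_two)
    (fun ψ hψ z _ =>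
      hw.tendsto_ballDiscrepancy hΩ hωcpt hωΩ hbdry hM hψ.1.continuous hψ.2 _ z) hε)
  refine ⟨N, fun i hi φ hφ hφC x hx => ?_⟩
  obtain ⟨ψ, hψ, hψC, hφψ⟩ := hφ.exists_lipschitzWith_abs_le hC hφC
  simp only [setIntegral_ball_inter_eq_ballIntegral_restrict hω.measurableSet hφψ]
  exact hN i hi ψ ⟨hψ, hψC⟩ x hx
end
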